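/- arXiv:1711.10363 — 5 statements merged into one kernel-verified Lean document; each statement's English description precedes it below -/
import Mathlib

section
/- Let (Ω, μ) and (Ω̃, μ̃) be probability spaces and for each n ≥ 1 let S_n : Ω → ℝ and S̃_n : Ω̃ → ℝ be measurable, with exp(sS_n) and exp(sS̃_n) integrable for every s > 0 and every n. Assume that for every n and every convex f : ℝ → ℝ such that f∘S_n and f∘S̃_n are integrable, E[f(S_n)] ≤ E[f(S̃_n)]. Define κ(s) = limsup_{n→∞}(1/n)·log E[exp(sS_n)] and κ̃(s) = limsup_{n→∞}(1/n)·log E[exp(sS̃_n)], and suppose the sets A = {s > 0 : κ(s) ≤ 0} and Ã = {s > 0 : κ̃(s) ≤ 0} are nonempty and bounded above. Then the adjustment coefficients θ = sup A and θ̃ = sup Ã satisfy θ̃ ≤ θ. -/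
/-!
Convex order applied to `x ↦ exp (s x)` compares the moment generating functions, hence the rate
sequences `(1/n) log E[exp (s Sₙ)]`, termwise; so `κ s ≤ κ' s` whenever the rate sequence of `S'`
is bounded above, and then `{κ' ≤ 0} ⊆ {κ ≤ 0}`. If it is unbounded at `s`, Lyapunov's inequality
`t log E[exp (s X)] ≤ s log E[exp (t X)]` makes it unbounded at every `t ≥ s`; since the real
`limsup` of an unbounded sequence is `0`, all of `[s, ∞)` would lie in `{κ' ≤ 0}`, which is
bounded above.
-/

open MeasureTheory Real Filter ProbabilityTheory

lemma convexOn_exp_mul (s : ℝ) : ConvexOn ℝ Set.univ fun x : ℝ => exp (s * x) :=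
  convexOn_exp.comp_linearMap (LinearMap.mul ℝ ℝ s)

section Lyapunov

variable {Ω : Type*} [MeasurableSpace Ω] {μ : Measure Ω} [IsProbabilityMeasure μ] {X : Ω → ℝ}
  {s t : ℝ}

lemma mgf_rpow_div_le_mgf (hs : 0 < s) (hst : s ≤ t)
    (ht : Integrable (fun ω => exp (t * X ω)) μ) : mgf X μ s ^ (t / s) ≤ mgf X μ t := by
  have hts : 1 ≤ t / s := (one_le_div hs).2 hst
  have hpow : ∀ ω, exp (s * X ω) ^ (t / s) = exp (t * X ω) := fun ω => by
    rw [← exp_mul]; field_simp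
  calc mgf X μ s ^ (t / s) ≤ ∫ ω, exp (s * X ω) ^ (t / s) ∂μ :=
        (convexOn_rpow hts).map_integral_le
          (fun x _ =>
            (continuousAt_rpow_const x _ (Or.inr (zero_le_one.trans hts))).continuousWithinAt)
          isClosed_Ici (ae_of_all _ fun ω => (exp_pos _).le)
          (integrable_exp_mul_of_nonneg_of_le ht hs.le hst) (by simpa only [Function.comp_def, hpow])
    _ = mgf X μ t := by simp only [hpow, mgf]

lemma cgf_le_div_mul_cgf (hs : 0 < s) (hst : s ≤ t)
    (ht : Integrable (fun ω => exp (t * X ω)) μ) : cgf X μ s ≤ s / t * cgf X μ t := by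
  have hpos := mgf_pos (integrable_exp_mul_of_nonneg_of_le ht hs.le hst)
  have h := log_le_log (rpow_pos_of_pos hpos _) (mgf_rpow_div_le_mgf hs hst ht)
  rw [log_rpow hpos] at h
  have ht0 : 0 < t := hs.trans_le hst
  calc cgf X μ s = s / t * (t / s * cgf X μ s) := by field_simp
    _ ≤ s / t * cgf X μ t := by gcongr; exact h

end Lyapunov

lemma Real.limsup_nonpos_of_eventuallyLE {α : Type*} {f : Filter α} {u v : α → ℝ}
    (h : u ≤ᶠ[f] v) (hv : f.IsBoundedUnder (· ≤ ·) v) (hv0 : limsup v f ≤ 0) :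
    limsup u f ≤ 0 := by
  by_cases hu : f.IsCoboundedUnder (· ≤ ·) u
  · exact (limsup_le_limsup h hu hv).trans hv0
  · rw [Real.limsup_of_not_isCoboundedUnder hu]

section Rate

variable {Ω : Type*} [MeasurableSpace Ω] {μ : Measure Ω} [IsProbabilityMeasure μ]
  {X : ℕ → Ω → ℝ} {s t : ℝ}

noncomputable def cgfRate (X : ℕ → Ω → ℝ) (μ : Measure Ω) (s : ℝ) (n : ℕ) : ℝ :=
  1 / (n : ℝ) * cgf (X n) μ s

lemma cgfRate_le_div_mul_cgfRate (hs : 0 < s) (hst : s ≤ t) {n : ℕ}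
    (ht : Integrable (fun ω => exp (t * X n ω)) μ) :
    cgfRate X μ s n ≤ s / t * cgfRate X μ t n := by
  unfold cgfRate
  calc 1 / (n : ℝ) * cgf (X n) μ s ≤ 1 / n * (s / t * cgf (X n) μ t) := by
        gcongr; exact cgf_le_div_mul_cgf hs hst ht
    _ = s / t * (1 / n * cgf (X n) μ t) := mul_left_comm _ _ _

lemma isBoundedUnder_cgfRate_of_le (hs : 0 < s) (hst : s ≤ t)
    (ht : ∀ n, 1 ≤ n → Integrable (fun ω => exp (t * X n ω)) μ)
    (hbdd : atTop.IsBoundedUnder (· ≤ ·) (cgfRate X μ t)) :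
    atTop.IsBoundedUnder (· ≤ ·) (cgfRate X μ s) := by
  obtain ⟨a, ha⟩ := hbdd
  refine isBoundedUnder_of_eventually_le (a := s / t * a) ?_
  filter_upwards [eventually_map.1 ha, eventually_ge_atTop 1] with n han hn
  calc cgfRate X μ s n ≤ s / t * cgfRate X μ t n := cgfRate_le_div_mul_cgfRate hs hst (ht n hn)
    _ ≤ s / t * a := by gcongr; exact div_nonneg hs.le (hs.trans_le hst).le

lemma cgfRate_le_cgfRate_of_mgf_le {Ω' : Type*} [MeasurableSpace Ω'] {μ' : Measure Ω'}
    {Y : ℕ → Ω' → ℝ} {n : ℕ} (hX : Integrable (fun ω => exp (s * X n ω)) μ)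
    (hXY : mgf (X n) μ s ≤ mgf (Y n) μ' s) : cgfRate X μ s n ≤ cgfRate Y μ' s n := by
  unfold cgfRate cgf
  gcongr
  exact mgf_pos hX

end Rate

theorem adjustment_coefficient_ordering_general
    {Ω : Type*} [MeasurableSpace Ω] (μ : Measure Ω) [IsProbabilityMeasure μ]
    {Ω' : Type*} [MeasurableSpace Ω'] (μ' : Measure Ω') [IsProbabilityMeasure μ']
    (S : ℕ → Ω → ℝ) (S' : ℕ → Ω' → ℝ)
    (hint : ∀ s : ℝ, 0 < s → ∀ n, 1 ≤ n → Integrable (fun ω => Real.exp (s * S n ω)) μ)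
    (hint' : ∀ s : ℝ, 0 < s → ∀ n, 1 ≤ n → Integrable (fun ω => Real.exp (s * S' n ω)) μ')
    (hcx : ∀ n, 1 ≤ n → ∀ f : ℝ → ℝ, ConvexOn ℝ Set.univ f →
      Integrable (fun ω => f (S n ω)) μ → Integrable (fun ω => f (S' n ω)) μ' →
      ∫ ω, f (S n ω) ∂μ ≤ ∫ ω, f (S' n ω) ∂μ')
    (κ κ' : ℝ → ℝ)
    (hκ : ∀ s : ℝ, κ s = Filter.limsup
      (fun n : ℕ => (1 / (n : ℝ)) * Real.log (∫ ω, Real.exp (s * S n ω) ∂μ)) Filter.atTop)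
    (hκ' : ∀ s : ℝ, κ' s = Filter.limsup
      (fun n : ℕ => (1 / (n : ℝ)) * Real.log (∫ ω, Real.exp (s * S' n ω) ∂μ')) Filter.atTop)
    (hA_bdd : BddAbove {s : ℝ | 0 < s ∧ κ s ≤ 0})
    (hA'_ne : {s : ℝ | 0 < s ∧ κ' s ≤ 0}.Nonempty)
    (hA'_bdd : BddAbove {s : ℝ | 0 < s ∧ κ' s ≤ 0}) :
    sSup {s : ℝ | 0 < s ∧ κ' s ≤ 0} ≤ sSup {s : ℝ | 0 < s ∧ κ s ≤ 0} := by
  change ∀ s, κ s = limsup (cgfRate S μ s) atTop at hκ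
  change ∀ s, κ' s = limsup (cgfRate S' μ' s) atTop at hκ'
  refine csSup_le_csSup hA_bdd hA'_ne fun s ⟨hs, hκ's⟩ => ⟨hs, ?_⟩
  -- An unbounded rate sequence has junk limsup `0`, which would put all of `[s, ∞)` into the set.
  have hbdd : atTop.IsBoundedUnder (· ≤ ·) (cgfRate S' μ' s) := by
    by_contra hunb
    obtain ⟨B, hB⟩ := hA'_bdd
    set t := max s (B + 1)
    have ht : 0 < t := hs.trans_le (le_max_left _ _)
    have htA' : t ∈ {s : ℝ | 0 < s ∧ κ' s ≤ 0} := by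
      refine ⟨ht, (hκ' t).trans_le ?_⟩
      rw [Real.limsup_of_not_isBoundedUnder
        (mt (isBoundedUnder_cgfRate_of_le hs (le_max_left _ _) (hint' t ht)) hunb)]
    linarith [hB htA', le_max_right s (B + 1)]
  have hle : ∀ n, cgfRate S μ s n ≤ cgfRate S' μ' s n := by
    intro n
    rcases Nat.eq_zero_or_pos n with rfl | hn
    · simp [cgfRate]
    · exact cgfRate_le_cgfRate_of_mgf_le (hint s hs n hn)
        (hcx n hn _ (convexOn_exp_mul s) (hint s hs n hn) (hint' s hs n hn))
  rw [hκ]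
  exact Real.limsup_nonpos_of_eventuallyLE (.of_forall hle) hbdd ((hκ' s).symm.trans_le hκ's)

/-- Adjustment-coefficient ordering theorem: convex ordering of the cumulative
(net increment) processes implies the corresponding ordering `θ̃ ≤ θ` of the
adjustment coefficients, defined as suprema of the sets where the limiting
log-moment-generating-rate functions are nonpositive. -/
theorem adjustment_coefficient_ordering
    {Ω : Type*} [MeasurableSpace Ω] (μ : Measure Ω) [IsProbabilityMeasure μ]
    {Ω' : Type*} [MeasurableSpace Ω'] (μ' : Measure Ω') [IsProbabilityMeasure μ']
    (S : ℕ → Ω → ℝ) (S' : ℕ → Ω' → ℝ)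
    (hS : ∀ n, Measurable (S n)) (hS' : ∀ n, Measurable (S' n))
    (hint : ∀ s : ℝ, 0 < s → ∀ n, 1 ≤ n → Integrable (fun ω => Real.exp (s * S n ω)) μ)
    (hint' : ∀ s : ℝ, 0 < s → ∀ n, 1 ≤ n → Integrable (fun ω => Real.exp (s * S' n ω)) μ')
    (hcx : ∀ n, 1 ≤ n → ∀ f : ℝ → ℝ, ConvexOn ℝ Set.univ f →
      Integrable (fun ω => f (S n ω)) μ → Integrable (fun ω => f (S' n ω)) μ' →
      ∫ ω, f (S n ω) ∂μ ≤ ∫ ω, f (S' n ω) ∂μ')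
    (κ κ' : ℝ → ℝ)
    (hκ : ∀ s : ℝ, κ s = Filter.limsup
      (fun n : ℕ => (1 / (n : ℝ)) * Real.log (∫ ω, Real.exp (s * S n ω) ∂μ)) Filter.atTop)
    (hκ' : ∀ s : ℝ, κ' s = Filter.limsup
      (fun n : ℕ => (1 / (n : ℝ)) * Real.log (∫ ω, Real.exp (s * S' n ω) ∂μ')) Filter.atTop)
    (hA_ne : {s : ℝ | 0 < s ∧ κ s ≤ 0}.Nonempty)
    (hA_bdd : BddAbove {s : ℝ | 0 < s ∧ κ s ≤ 0})
    (hA'_ne : {s : ℝ | 0 < s ∧ κ' s ≤ 0}.Nonempty)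
    (hA'_bdd : BddAbove {s : ℝ | 0 < s ∧ κ' s ≤ 0}) :
    sSup {s : ℝ | 0 < s ∧ κ' s ≤ 0} ≤ sSup {s : ℝ | 0 < s ∧ κ s ≤ 0} :=
  adjustment_coefficient_ordering_general μ μ' S S' hint hint' hcx κ κ' hκ hκ' hA_bdd hA'_ne hA'_bdd
end

section
/- Let n ≥ 1 and let X, Y : Ω → (Fin n → ℝ) be random vectors (on possibly different probability spaces) such that for every measurable supermodular function f : (Fin n → ℝ) → ℝ for which f∘X and f∘Y are integrable, E[f(X)] ≤ E[f(Y)]. Then for every convex function g : ℝ → ℝ such that g(Σ_{i} X_i) and g(Σ_i Y_i) are integrable, E[g(Σ_{i=1}^n X_i)] ≤ E[g(Σ_{i=1}^n Y_i)]. -/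
/-!
The function `x ↦ g (∑ i, x i)` is supermodular whenever `g` is convex: the sums of `x ⊓ y` and
`x ⊔ y` enclose those of `x` and `y` and have the same total, so convexity of `g` gives
`g (∑ x) + g (∑ y) ≤ g (∑ (x ⊔ y)) + g (∑ (x ⊓ y))`. Testing the supermodular order against this
function yields the convex order of the sums.
-/

open MeasureTheory Set

def Supermodular {α β : Type*} [Lattice α] [Add β] [LE β] (f : α → β) : Prop :=
  ∀ x y, f x + f y ≤ f (x ⊔ y) + f (x ⊓ y)

theorem ConvexOn.map_add_map_add_sub_le {D : Set ℝ} {g : ℝ → ℝ} (hg : ConvexOn ℝ D g)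
    {a s b : ℝ} (ha : a ∈ D) (hb : b ∈ D) (has : a ≤ s) (hsb : s ≤ b) :
    g s + g (a + b - s) ≤ g a + g b := by
  rcases (has.trans hsb).eq_or_lt with rfl | hab
  · obtain rfl : s = a := le_antisymm hsb has
    simp
  have hd : 0 < b - a := sub_pos.mpr hab
  -- `s` and `a + b - s` are the convex combinations of `a, b` with weights `(l, m)` and `(m, l)`.
  set l := (b - s) / (b - a)
  set m := (s - a) / (b - a)
  have hl : 0 ≤ l := div_nonneg (by linarith) hd.le
  have hm : 0 ≤ m := div_nonneg (by linarith) hd.le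
  have hlm : l + m = 1 := by simp only [l, m]; field_simp; ring
  have hs : l • a + m • b = s := by simp only [l, m, smul_eq_mul]; field_simp; ring
  have ht : m • a + l • b = a + b - s := by simp only [l, m, smul_eq_mul]; field_simp; ring
  have h₁ := hg.2 ha hb hl hm hlm
  have h₂ := hg.2 ha hb hm hl (by rwa [add_comm])
  rw [hs] at h₁
  rw [ht] at h₂
  simp only [smul_eq_mul] at h₁ h₂
  linear_combination h₁ + h₂ + (g a + g b) * hlm

theorem ConvexOn.supermodular_comp {α : Type*} [Lattice α] {L : α → ℝ} (hL : Monotone L)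
    (hL_modular : ∀ x y, L (x ⊔ y) + L (x ⊓ y) = L x + L y)
    {g : ℝ → ℝ} (hg : ConvexOn ℝ univ g) : Supermodular (g ∘ L) := by
  intro x y
  have key : g (L x) + g (L (x ⊓ y) + L (x ⊔ y) - L x) ≤ g (L (x ⊓ y)) + g (L (x ⊔ y)) :=
    hg.map_add_map_add_sub_le (mem_univ _) (mem_univ _) (hL inf_le_left) (hL le_sup_left)
  have hy : L (x ⊓ y) + L (x ⊔ y) - L x = L y := by linarith [hL_modular x y]
  rw [hy] at key
  simp only [Function.comp_apply]
  linarith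

theorem ConvexOn.supermodular_comp_sum {ι : Type*} [Fintype ι] {g : ℝ → ℝ}
    (hg : ConvexOn ℝ univ g) : Supermodular fun x : ι → ℝ => g (∑ i, x i) :=
  hg.supermodular_comp (L := fun x : ι → ℝ => ∑ i, x i)
    (fun _ _ hxy => Finset.sum_le_sum fun i _ => Pi.le_def.mp hxy i) fun x y => by
      simp only [← Finset.sum_add_distrib, Pi.sup_apply, Pi.inf_apply, max_add_min]

theorem supermodular_order_implies_convex_order_of_sum_general
    {n : ℕ}
    {Ω : Type*} [MeasurableSpace Ω] (μ : Measure Ω)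
    {Ω' : Type*} [MeasurableSpace Ω'] (μ' : Measure Ω')
    (X : Ω → (Fin n → ℝ)) (Y : Ω' → (Fin n → ℝ))
    (hsm : ∀ f : (Fin n → ℝ) → ℝ, Measurable f →
      (∀ x y : Fin n → ℝ, f x + f y ≤ f (x ⊔ y) + f (x ⊓ y)) →
      Integrable (fun ω => f (X ω)) μ → Integrable (fun ω => f (Y ω)) μ' →
      ∫ ω, f (X ω) ∂μ ≤ ∫ ω, f (Y ω) ∂μ') :
    ∀ g : ℝ → ℝ, ConvexOn ℝ Set.univ g →
      Integrable (fun ω => g (∑ i, X ω i)) μ → Integrable (fun ω => g (∑ i, Y ω i)) μ' →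
      ∫ ω, g (∑ i, X ω i) ∂μ ≤ ∫ ω, g (∑ i, Y ω i) ∂μ' := by
  intro g hg hgX hgY
  have hg_meas : Measurable g := hg.locallyLipschitz.continuous.measurable
  exact hsm _ (hg_meas.comp (Finset.measurable_sum _ fun i _ => measurable_pi_apply i))
    hg.supermodular_comp_sum hgX hgY

/-- Supermodular ordering of random vectors implies convex ordering of the sums of
their components: if `E[f(X)] ≤ E[f(Y)]` for all measurable supermodular `f`, then
`E[g(Σᵢ Xᵢ)] ≤ E[g(Σᵢ Yᵢ)]` for all convex `g` (with integrability side conditions). -/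
theorem supermodular_order_implies_convex_order_of_sum
    {n : ℕ} (hn : 1 ≤ n)
    {Ω : Type*} [MeasurableSpace Ω] (μ : Measure Ω) [IsProbabilityMeasure μ]
    {Ω' : Type*} [MeasurableSpace Ω'] (μ' : Measure Ω') [IsProbabilityMeasure μ']
    (X : Ω → (Fin n → ℝ)) (Y : Ω' → (Fin n → ℝ))
    (hX : Measurable X) (hY : Measurable Y)
    (hsm : ∀ f : (Fin n → ℝ) → ℝ, Measurable f →
      (∀ x y : Fin n → ℝ, f x + f y ≤ f (x ⊔ y) + f (x ⊓ y)) →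
      Integrable (fun ω => f (X ω)) μ → Integrable (fun ω => f (Y ω)) μ' →
      ∫ ω, f (X ω) ∂μ ≤ ∫ ω, f (Y ω) ∂μ') :
    ∀ g : ℝ → ℝ, ConvexOn ℝ Set.univ g →
      Integrable (fun ω => g (∑ i, X ω i)) μ → Integrable (fun ω => g (∑ i, Y ω i)) μ' →
      ∫ ω, g (∑ i, X ω i) ∂μ ≤ ∫ ω, g (∑ i, Y ω i) ∂μ' :=
  supermodular_order_implies_convex_order_of_sum_general μ μ' X Y hsm
end

section
/- Define α, β : ℝ → ℝ by α(h) = e^{−2h}(1 − e^{−h})/2 and β(h) = e^{−2h}(1 + e^{−h})/2. Then for all h₁, h₂ ∈ ℝ: α(h₁ + h₂) = β(h₁)α(h₂) + α(h₁)β(h₂) and β(h₁ + h₂) = α(h₁)α(h₂) + β(h₁)β(h₂). Moreover, for every h ≥ 0, α(h) ≥ 0, β(h) ≥ 0, and α(h) + β(h) ≤ 1. -/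
open Real

/-!
Writing `q = e^{-h}`, we have `β + α = q²` and `β - α = q³`, both of which turn sums of
times into products. So `(β, α)` behaves like `(cosh, sinh)`, and the two functional
equations are the hyperbolic addition formulas. The constraints for `h ≥ 0` follow from
`0 < q ≤ 1`.
-/

section AdditionFormulas

variable {M R : Type*} [Add M] [CommRing R] [NoZeroDivisors R] [NeZero (2 : R)]
  {a b : M → R}

theorem sinhLike_add (hs : ∀ x y, b (x + y) + a (x + y) = (b x + a x) * (b y + a y))
    (hd : ∀ x y, b (x + y) - a (x + y) = (b x - a x) * (b y - a y)) (x y : M) :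
    a (x + y) = b x * a y + a x * b y := by
  refine mul_left_cancel₀ (two_ne_zero (α := R)) ?_
  linear_combination hs x y - hd x y

theorem coshLike_add (hs : ∀ x y, b (x + y) + a (x + y) = (b x + a x) * (b y + a y))
    (hd : ∀ x y, b (x + y) - a (x + y) = (b x - a x) * (b y - a y)) (x y : M) :
    b (x + y) = a x * a y + b x * b y := by
  refine mul_left_cancel₀ (two_ne_zero (α := R)) ?_
  linear_combination hs x y + hd x y

end AdditionFormulas

theorem exp_neg_mul_add (c x y : ℝ) : exp (-c * (x + y)) = exp (-c * x) * exp (-c * y) := by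
  rw [← exp_add]
  ring_nf

noncomputable def frechetAlpha (h : ℝ) : ℝ := exp (-2 * h) * (1 - exp (-h)) / 2

noncomputable def frechetBeta (h : ℝ) : ℝ := exp (-2 * h) * (1 + exp (-h)) / 2

theorem frechetBeta_add_frechetAlpha (h : ℝ) : frechetBeta h + frechetAlpha h = exp (-2 * h) := by
  unfold frechetAlpha frechetBeta
  ring

theorem frechetBeta_sub_frechetAlpha (h : ℝ) : frechetBeta h - frechetAlpha h = exp (-3 * h) := by
  have : exp (-3 * h) = exp (-2 * h) * exp (-h) := by
    rw [← exp_add]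
    ring_nf
  unfold frechetAlpha frechetBeta
  rw [this]
  ring

theorem frechetBeta_add_frechetAlpha_map_add (x y : ℝ) :
    frechetBeta (x + y) + frechetAlpha (x + y) =
      (frechetBeta x + frechetAlpha x) * (frechetBeta y + frechetAlpha y) := by
  simp only [frechetBeta_add_frechetAlpha, exp_neg_mul_add]

theorem frechetBeta_sub_frechetAlpha_map_add (x y : ℝ) :
    frechetBeta (x + y) - frechetAlpha (x + y) =
      (frechetBeta x - frechetAlpha x) * (frechetBeta y - frechetAlpha y) := by
  simp only [frechetBeta_sub_frechetAlpha, exp_neg_mul_add]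

theorem frechetAlpha_nonneg {h : ℝ} (hh : 0 ≤ h) : 0 ≤ frechetAlpha h := by
  have : exp (-h) ≤ 1 := exp_le_one_iff.mpr (neg_nonpos.mpr hh)
  unfold frechetAlpha
  exact div_nonneg (mul_nonneg (exp_pos _).le (sub_nonneg.mpr this)) zero_le_two

theorem frechetBeta_nonneg (h : ℝ) : 0 ≤ frechetBeta h := by
  unfold frechetBeta
  positivity

theorem frechetAlpha_add_frechetBeta_le_one {h : ℝ} (hh : 0 ≤ h) :
    frechetAlpha h + frechetBeta h ≤ 1 := by
  rw [add_comm, frechetBeta_add_frechetAlpha, exp_le_one_iff]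
  linarith

/-- The pair `α(h) = e^{−2h}(1 − e^{−h})/2`, `β(h) = e^{−2h}(1 + e^{−h})/2` solves
the Fréchet Markov-family functional equations and satisfies the copula
convex-combination constraints for `h ≥ 0`. -/
theorem frechet_markov_family_solution :
    (∀ h₁ h₂ : ℝ,
      Real.exp (-2 * (h₁ + h₂)) * (1 - Real.exp (-(h₁ + h₂))) / 2 =
        (Real.exp (-2 * h₁) * (1 + Real.exp (-h₁)) / 2) *
            (Real.exp (-2 * h₂) * (1 - Real.exp (-h₂)) / 2) +
          (Real.exp (-2 * h₁) * (1 - Real.exp (-h₁)) / 2) *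
            (Real.exp (-2 * h₂) * (1 + Real.exp (-h₂)) / 2)) ∧
    (∀ h₁ h₂ : ℝ,
      Real.exp (-2 * (h₁ + h₂)) * (1 + Real.exp (-(h₁ + h₂))) / 2 =
        (Real.exp (-2 * h₁) * (1 - Real.exp (-h₁)) / 2) *
            (Real.exp (-2 * h₂) * (1 - Real.exp (-h₂)) / 2) +
          (Real.exp (-2 * h₁) * (1 + Real.exp (-h₁)) / 2) *
            (Real.exp (-2 * h₂) * (1 + Real.exp (-h₂)) / 2)) ∧
    (∀ h : ℝ, 0 ≤ h →
      0 ≤ Real.exp (-2 * h) * (1 - Real.exp (-h)) / 2 ∧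
      0 ≤ Real.exp (-2 * h) * (1 + Real.exp (-h)) / 2 ∧
      Real.exp (-2 * h) * (1 - Real.exp (-h)) / 2 +
        Real.exp (-2 * h) * (1 + Real.exp (-h)) / 2 ≤ 1) :=
  ⟨sinhLike_add frechetBeta_add_frechetAlpha_map_add frechetBeta_sub_frechetAlpha_map_add,
    coshLike_add frechetBeta_add_frechetAlpha_map_add frechetBeta_sub_frechetAlpha_map_add,
    fun _ hh => ⟨frechetAlpha_nonneg hh, frechetBeta_nonneg _,
      frechetAlpha_add_frechetBeta_le_one hh⟩⟩
end

section
/- Define a, b : ℝ → ℝ by a(α) = α²(1 − α)/2 and b(α) = α²(1 + α)/2. Then for all α₁, α₂ ∈ ℝ: a(α₁α₂) = b(α₁)a(α₂) + a(α₁)b(α₂) and b(α₁α₂) = a(α₁)a(α₂) + b(α₁)b(α₂). Moreover, for every α ∈ [−1, 1], a(α) ≥ 0, b(α) ≥ 0, and a(α) + b(α) ≤ 1. -/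
/-! Writing `a = (α² - α³)/2` and `b = (α² + α³)/2`, the functional equations are half the
difference and half the sum of the multiplicativity of `α²` and of `α³`. On `[-1, 1]` both
coefficients are visibly nonnegative and their sum is `α² ≤ 1`. -/

namespace FrechetCopula

/-- `a(α)`, the weight of `W` in `C_α`. -/
noncomputable def weightW (α : ℝ) : ℝ := α ^ 2 * (1 - α) / 2

/-- `b(α)`, the weight of `M` in `C_α`. -/
noncomputable def weightM (α : ℝ) : ℝ := α ^ 2 * (1 + α) / 2

theorem weightW_mul (α₁ α₂ : ℝ) :
    weightW (α₁ * α₂) = weightM α₁ * weightW α₂ + weightW α₁ * weightM α₂ := by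
  unfold weightW weightM
  ring

theorem weightM_mul (α₁ α₂ : ℝ) :
    weightM (α₁ * α₂) = weightW α₁ * weightW α₂ + weightM α₁ * weightM α₂ := by
  unfold weightW weightM
  ring

theorem weightW_nonneg {α : ℝ} (hα : α ≤ 1) : 0 ≤ weightW α := by
  unfold weightW
  have : 0 ≤ 1 - α := sub_nonneg.mpr hα
  positivity

theorem weightM_nonneg {α : ℝ} (hα : -1 ≤ α) : 0 ≤ weightM α := by
  unfold weightM
  have : 0 ≤ 1 + α := by linarith
  positivity

theorem weightW_add_weightM (α : ℝ) : weightW α + weightM α = α ^ 2 := by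
  unfold weightW weightM
  ring

theorem weightW_add_weightM_le_one {α : ℝ} (hα : α ∈ Set.Icc (-1 : ℝ) 1) :
    weightW α + weightM α ≤ 1 := by
  rw [weightW_add_weightM, sq_le_one_iff_abs_le_one, abs_le]
  exact hα

end FrechetCopula

open FrechetCopula in
/-- The one-parameter Fréchet copula coefficients `a(α) = α²(1−α)/2` and
`b(α) = α²(1+α)/2` satisfy the Markov ⋆-product functional equations with
parameter multiplication, and give a valid convex combination for `α ∈ [−1, 1]`. -/
theorem one_parameter_frechet_copula_coeffs :
    (∀ α₁ α₂ : ℝ,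
      (α₁ * α₂) ^ 2 * (1 - α₁ * α₂) / 2 =
        (α₁ ^ 2 * (1 + α₁) / 2) * (α₂ ^ 2 * (1 - α₂) / 2) +
          (α₁ ^ 2 * (1 - α₁) / 2) * (α₂ ^ 2 * (1 + α₂) / 2)) ∧
    (∀ α₁ α₂ : ℝ,
      (α₁ * α₂) ^ 2 * (1 + α₁ * α₂) / 2 =
        (α₁ ^ 2 * (1 - α₁) / 2) * (α₂ ^ 2 * (1 - α₂) / 2) +
          (α₁ ^ 2 * (1 + α₁) / 2) * (α₂ ^ 2 * (1 + α₂) / 2)) ∧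
    (∀ α : ℝ, α ∈ Set.Icc (-1 : ℝ) 1 →
      0 ≤ α ^ 2 * (1 - α) / 2 ∧ 0 ≤ α ^ 2 * (1 + α) / 2 ∧
        α ^ 2 * (1 - α) / 2 + α ^ 2 * (1 + α) / 2 ≤ 1) :=
  ⟨weightW_mul, weightM_mul, fun _ hα =>
    ⟨weightW_nonneg hα.2, weightM_nonneg hα.1, weightW_add_weightM_le_one hα⟩⟩
end

section
/- Let x, y ∈ [0, 1], let α₁, β₁, α₂, β₂ ≥ 0 with α₁ + β₁ ≤ 1 and α₂ + β₂ ≤ 1, and set γ₁ = 1 − α₁ − β₁, γ₂ = 1 − α₂ − β₂. Then ∫₀¹ (α₁·1_{(1−x,1]}(ξ) + γ₁·x + β₁·1_{[0,x)}(ξ)) · (α₂·1_{(1−y,1]}(ξ) + γ₂·y + β₂·1_{[0,y)}(ξ)) dξ = α₃·max(x + y − 1, 0) + γ₃·xy + β₃·min(x, y), where α₃ = β₁α₂ + α₁β₂, β₃ = α₁α₂ + β₁β₂, and γ₃ = 1 − α₃ − β₃. -/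
/-!
On `[0, 1]` each partial derivative is, up to the null set `{0, x}`, a linear combination
`α · 1_{(1-x,1]} + γ x · 1 + β · 1_{(0,x]}` of indicators of three intervals. The integral of a
product of two such combinations is the bilinear form of the pairwise overlap lengths, and the
nine overlaps of `(1-x,1], ℝ, (0,x]` with `(1-y,1], ℝ, (0,y]` inside `(0,1]` have lengths
`min x y`, `x`, `y`, `1` and `max (x + y - 1) 0`; collecting coefficients gives the formula.
-/

open MeasureTheory Set

theorem integral_sum_indicator_mul_sum_indicator {Ω ι κ : Type*} [MeasurableSpace Ω]
    (μ : Measure Ω) [IsFiniteMeasure μ] (s : Finset ι) (t : Finset κ) (a : ι → ℝ) (b : κ → ℝ)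
    (S : ι → Set Ω) (T : κ → Set Ω) (hS : ∀ i ∈ s, MeasurableSet (S i))
    (hT : ∀ j ∈ t, MeasurableSet (T j)) :
    ∫ ω, (∑ i ∈ s, a i * (S i).indicator 1 ω) * (∑ j ∈ t, b j * (T j).indicator 1 ω) ∂μ =
      ∑ i ∈ s, ∑ j ∈ t, a i * b j * μ.real (S i ∩ T j) := by
  have hprod (ω : Ω) :
      (∑ i ∈ s, a i * (S i).indicator 1 ω) * (∑ j ∈ t, b j * (T j).indicator 1 ω) =
        ∑ i ∈ s, ∑ j ∈ t, a i * b j * (S i ∩ T j).indicator 1 ω := by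
    simp only [Finset.sum_mul_sum, inter_indicator_one, Pi.mul_apply]
    exact Finset.sum_congr rfl fun _ _ => Finset.sum_congr rfl fun _ _ => by ring
  have hint : ∀ i ∈ s, ∀ j ∈ t, Integrable ((S i ∩ T j).indicator (1 : Ω → ℝ)) μ :=
    fun i hi j hj => (integrable_const 1).indicator ((hS i hi).inter (hT j hj))
  simp_rw [hprod]
  rw [integral_finsetSum _ fun i hi =>
    integrable_finsetSum _ fun j hj => (hint i hi j hj).const_mul _]
  refine Finset.sum_congr rfl fun i hi => ?_
  rw [integral_finsetSum _ fun j hj => (hint i hi j hj).const_mul _]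
  refine Finset.sum_congr rfl fun j hj => ?_
  rw [integral_const_mul, integral_indicator_one ((hS i hi).inter (hT j hj))]

def frechetWeight (α β x : ℝ) : Fin 3 → ℝ := ![α, (1 - α - β) * x, β]

def frechetSet (x : ℝ) : Fin 3 → Set ℝ := ![Ioc (1 - x) 1, univ, Ioc 0 x]

theorem measurableSet_frechetSet (x : ℝ) (i : Fin 3) : MeasurableSet (frechetSet x i) := by
  fin_cases i <;> simp [frechetSet]

theorem frechetDensity_ae_eq (α β x : ℝ) :
    (fun ξ => α * (Ioc (1 - x) 1).indicator 1 ξ + (1 - α - β) * x +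
      β * (Ico 0 x).indicator 1 ξ) =ᵐ[volume]
    fun ξ => ∑ i, frechetWeight α β x i * (frechetSet x i).indicator 1 ξ := by
  filter_upwards [indicator_ae_eq_of_ae_eq_set (f := (1 : ℝ → ℝ)) (Ico_ae_eq_Ioc (a := (0 : ℝ)) (b := x))]
    with ξ hξ
  simp only [hξ, frechetWeight, frechetSet, Fin.sum_univ_three, Fin.isValue, Matrix.cons_val_zero,
    Matrix.cons_val_one, mem_univ, indicator_of_mem, Pi.one_apply, mul_one, Matrix.cons_val]

theorem measureReal_frechetSet_inter {x y : ℝ} (hx : x ∈ Icc 0 1) (hy : y ∈ Icc 0 1)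
    (i j : Fin 3) :
    (volume.restrict (Ioc 0 1)).real (frechetSet x i ∩ frechetSet y j) =
      ![![min x y, x, max (x + y - 1) 0], ![y, 1, y], ![max (x + y - 1) 0, x, min x y]] i j := by
  obtain ⟨hx0, hx1⟩ := hx
  obtain ⟨hy0, hy1⟩ := hy
  fin_cases i <;> fin_cases j <;>
    simp [frechetSet, measureReal_restrict_apply, Ioc_inter_Ioc, max_sub_sub_left,
      hx0, hx1, hy0, hy1] <;>
    ring_nf

theorem frechet_star_product_general
    (x y : ℝ) (hx : x ∈ Set.Icc (0 : ℝ) 1) (hy : y ∈ Set.Icc (0 : ℝ) 1)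
    (α₁ β₁ α₂ β₂ : ℝ) :
    ∫ ξ in (0 : ℝ)..1,
        (α₁ * Set.indicator (Set.Ioc (1 - x) 1) (fun _ => (1 : ℝ)) ξ +
            (1 - α₁ - β₁) * x +
            β₁ * Set.indicator (Set.Ico 0 x) (fun _ => (1 : ℝ)) ξ) *
          (α₂ * Set.indicator (Set.Ioc (1 - y) 1) (fun _ => (1 : ℝ)) ξ +
            (1 - α₂ - β₂) * y +
            β₂ * Set.indicator (Set.Ico 0 y) (fun _ => (1 : ℝ)) ξ) =
      (β₁ * α₂ + α₁ * β₂) * max (x + y - 1) 0 +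
        (1 - (β₁ * α₂ + α₁ * β₂) - (α₁ * α₂ + β₁ * β₂)) * (x * y) +
        (α₁ * α₂ + β₁ * β₂) * min x y := by
  rw [intervalIntegral.integral_of_le zero_le_one]
  calc _ = ∫ ξ in Ioc 0 1,
        (∑ i, frechetWeight α₁ β₁ x i * (frechetSet x i).indicator 1 ξ) *
          (∑ j, frechetWeight α₂ β₂ y j * (frechetSet y j).indicator 1 ξ) :=
        integral_congr_ae (ae_restrict_of_ae
          ((frechetDensity_ae_eq α₁ β₁ x).mul (frechetDensity_ae_eq α₂ β₂ y)))
    _ = ∑ i, ∑ j, frechetWeight α₁ β₁ x i * frechetWeight α₂ β₂ y j *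
          (volume.restrict (Ioc 0 1)).real (frechetSet x i ∩ frechetSet y j) :=
        integral_sum_indicator_mul_sum_indicator _ _ _ _ _ _ _
          (fun i _ => measurableSet_frechetSet x i) (fun j _ => measurableSet_frechetSet y j)
    _ = _ := by
      simp only [frechetWeight, measureReal_frechetSet_inter hx hy, Fin.sum_univ_three,
        Fin.isValue, Matrix.cons_val_zero, Matrix.cons_val_one, Matrix.cons_val, mul_one]
      ring

/-- Closure of the Fréchet copula family under the Darsow–Nguyen–Olsen ⋆-product:
the integral of the product of the a.e. partial derivatives of two Fréchet copulas
with parameters `(αᵢ, βᵢ)` is the Fréchet copula with parameters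
`α₃ = β₁α₂ + α₁β₂`, `β₃ = α₁α₂ + β₁β₂`. -/
theorem frechet_star_product
    (x y : ℝ) (hx : x ∈ Set.Icc (0 : ℝ) 1) (hy : y ∈ Set.Icc (0 : ℝ) 1)
    (α₁ β₁ α₂ β₂ : ℝ)
    (hα₁ : 0 ≤ α₁) (hβ₁ : 0 ≤ β₁) (hα₂ : 0 ≤ α₂) (hβ₂ : 0 ≤ β₂)
    (h₁ : α₁ + β₁ ≤ 1) (h₂ : α₂ + β₂ ≤ 1) :
    ∫ ξ in (0 : ℝ)..1,
        (α₁ * Set.indicator (Set.Ioc (1 - x) 1) (fun _ => (1 : ℝ)) ξ +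
            (1 - α₁ - β₁) * x +
            β₁ * Set.indicator (Set.Ico 0 x) (fun _ => (1 : ℝ)) ξ) *
          (α₂ * Set.indicator (Set.Ioc (1 - y) 1) (fun _ => (1 : ℝ)) ξ +
            (1 - α₂ - β₂) * y +
            β₂ * Set.indicator (Set.Ico 0 y) (fun _ => (1 : ℝ)) ξ) =
      (β₁ * α₂ + α₁ * β₂) * max (x + y - 1) 0 +
        (1 - (β₁ * α₂ + α₁ * β₂) - (α₁ * α₂ + β₁ * β₂)) * (x * y) +
        (α₁ * α₂ + β₁ * β₂) * min x y :=
  frechet_star_product_general x y hx hy α₁ β₁ α₂ β₂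
end
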